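/- For every subset F ⊆ E, the number of subgraphs K ∈ S_f with A(K) = F equals the number of orientations L ∈ O_f with A(L) = F; that is, the count of subgraphs and of orientations is equal even when refined according to their min-cost d-flow. -/

import Mathlib

open Finset

section Defs

variable {V : Type*}

/-- Reversal of a directed edge. -/
def drev (e : V × V) : V × V := (e.2, e.1)

/-- `K` is a subgraph of the (symmetric) edge set `E`: it contains either both or
neither of `e` and `drev e` for every `e ∈ E`. -/
def IsSubgraph [DecidableEq V] (E K : Finset (V × V)) : Prop :=
  K ⊆ E ∧ ∀ e ∈ E, (e ∈ K ↔ drev e ∈ K)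

/-- `L` is an orientation of the (symmetric) edge set `E`: it contains exactly one of
`e` and `drev e` for every `e ∈ E`. -/
def IsOrientation [DecidableEq V] (E L : Finset (V × V)) : Prop :=
  L ⊆ E ∧ ∀ e ∈ E, (e ∈ L ↔ drev e ∉ L)

variable [Fintype V] [DecidableEq V]

/-- `f` is a `d`-flow on the directed subgraph `D` of the graph with edge set `E`. -/
def IsFlow (E D : Finset (V × V)) (d : V → ℤ) (f : V × V → ℝ) : Prop :=
  (∀ e ∈ E, 0 ≤ f e ∧ f e ≤ 1) ∧
  (∀ e, e ∉ D → f e = 0) ∧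
  ∀ u : V,
    ((Finset.univ.filter (fun v : V => (u, v) ∈ E)).sum fun v => f (u, v)) -
      ((Finset.univ.filter (fun v : V => (v, u) ∈ E)).sum fun v => f (v, u)) = (d u : ℝ)

/-- A `d`-flow exists on `D`. -/
def AdmitsFlow (E D : Finset (V × V)) (d : V → ℤ) : Prop :=
  ∃ f : V × V → ℝ, IsFlow E D d f

/-- The `w`-cost of a flow `f`. -/
def flowCost (E : Finset (V × V)) (w : V × V → ℝ) (f : V × V → ℝ) : ℝ :=
  ∑ e ∈ E, w e * f e

/-- `f` is a min-cost `d`-flow on `D`. -/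
def IsMinCostFlow (E D : Finset (V × V)) (d : V → ℤ) (w : V × V → ℝ)
    (f : V × V → ℝ) : Prop :=
  IsFlow E D d f ∧ ∀ g : V × V → ℝ, IsFlow E D d g → flowCost E w f ≤ flowCost E w g

/-- The `{0,1}`-valued function determined by a set of edges. -/
def ind (S : Finset (V × V)) : V × V → ℝ := fun e => if e ∈ S then 1 else 0

/-- `A` assigns to every flow-admitting `D ⊆ E` the (edge set of the) unique,
`{0,1}`-valued min-cost `d`-flow on `D`. -/
def GoodA (E : Finset (V × V)) (d : V → ℤ) (w : V × V → ℝ)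
    (A : Finset (V × V) → Finset (V × V)) : Prop :=
  ∀ D : Finset (V × V), D ⊆ E → AdmitsFlow E D d →
    IsMinCostFlow E D d w (ind (A D)) ∧
    ∀ f : V × V → ℝ, IsMinCostFlow E D d w f → f = ind (A D)

/-- `A(D) = A(D')`: both `D` and `D'` admit a `d`-flow and their unique min-cost
`d`-flows coincide.  (If one of them admits no `d`-flow this is false.) -/
def AEq (E : Finset (V × V)) (d : V → ℤ) (A : Finset (V × V) → Finset (V × V))
    (D D' : Finset (V × V)) : Prop :=
  AdmitsFlow E D d ∧ AdmitsFlow E D' d ∧ A D = A D'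

/-- `D ⊕ e := (D ∪ {e}) \ {drev e}`. -/
def oplus (D : Finset (V × V)) (e : V × V) : Finset (V × V) := insert e D \ {drev e}

/-- `D + e := D ∪ {e, drev e}`. -/
def padd (D : Finset (V × V)) (e : V × V) : Finset (V × V) := D ∪ {e, drev e}

/-- `D − e := D \ {e, drev e}`. -/
def psub (D : Finset (V × V)) (e : V × V) : Finset (V × V) := D \ {e, drev e}

/-- The representative of `{e, drev e}` lying in the reference orientation `E'`. -/
def chi (E' : Finset (V × V)) (e : V × V) : V × V := if e ∈ E' then e else drev e

/-- The map `φ_e`. -/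
noncomputable def phiE (E : Finset (V × V)) (d : V → ℤ)
    (A : Finset (V × V) → Finset (V × V)) (E' : Finset (V × V))
    (e : V × V) (D : Finset (V × V)) : Finset (V × V) := by
  classical
  exact
    if ¬ AEq E d A D (oplus D e) then oplus D (drev e)
    else if ¬ AEq E d A D (oplus D (drev e)) then oplus D e
    else if e ∈ D then oplus D (chi E' e) else oplus D (drev (chi E' e))

/-- The map `ψ_e`. -/
noncomputable def psiE (E : Finset (V × V)) (d : V → ℤ)
    (A : Finset (V × V) → Finset (V × V)) (E' : Finset (V × V))
    (e : V × V) (D : Finset (V × V)) : Finset (V × V) := by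
  classical
  exact
    if ¬ AEq E d A D (padd D e) then psub D e
    else if ¬ AEq E d A D (psub D e) then padd D e
    else if chi E' e ∈ D then padd D e else psub D e

end Defs

/-!
Interpolate between subgraphs and orientations one pair `{e, ē}` at a time, through the sets
`D ⊆ E` that are oriented on the pairs meeting some `S ⊆ E` and symmetric on the others.
Orienting one more pair does not change the number of such `D` with min-cost flow `F`, because
the indicator `g` of "`D` admits a flow and `A(D) = F`" satisfies the exchange identity
`g(D₀) + g(D₀ + e + ē) = g(D₀ + e) + g(D₀ + ē)` whenever `e, ē ∉ D₀`.

The identity holds since a min-cost flow never uses both `e` and `ē` (cancelling the 2-cycle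
would be cheaper), so `A(D₀ + e + ē)` is `A(D₀ + e)` or `A(D₀ + ē)`, say the former. Then
`A(D₀ + ē)` avoids `ē` and is therefore `A(D₀)`: otherwise either `A(D₀ + e)` uses `e` too,
and averaging the two flows and cancelling the half 2-cycle gives a cheaper flow on `D₀`, or
`A(D₀ + e)` lives on `D₀ ⊆ D₀ + ē` and is then also the min-cost flow on `D₀ + ē`.
-/

lemma Set.ncard_setOf_and_eq_sum {β : Type*} (s : Finset β) {P Q : β → Prop} [DecidablePred P]
    [DecidablePred Q] (hP : ∀ x, P x → x ∈ s) :
    {x | P x ∧ Q x}.ncard = ∑ x ∈ s with P x, if Q x then 1 else 0 := by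
  rw [← card_filter, filter_filter, ← Set.ncard_coe_finset]
  congr 1
  ext x
  simpa using fun hx _ => hP x hx

section Mixed

variable {V : Type*}

@[simp] lemma drev_drev (e : V × V) : drev (drev e) = e := rfl

lemma drev_involutive : Function.Involutive (drev : V × V → V × V) := drev_drev

variable [DecidableEq V] {E S S₀ D D₀ : Finset (V × V)} {e : V × V}

lemma drev_mem_pair {x : V × V} :
    drev x ∈ ({e, drev e} : Finset (V × V)) ↔ x ∈ ({e, drev e} : Finset (V × V)) := by
  simp only [mem_insert, mem_singleton, drev_involutive.eq_iff, drev_drev, or_comm]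

/-- `D` is an orientation on the pairs `{x, x̄}` meeting `S` and a subgraph on the others,
since `(a ↔ ¬b) ↔ ¬(a ↔ b)`. -/
def IsMixed (E S D : Finset (V × V)) : Prop :=
  ∀ x ∈ E, ((x ∈ D ↔ drev x ∈ D) ↔ (x ∉ S ∧ drev x ∉ S))

lemma isSubgraph_iff_isMixed_empty : IsSubgraph E D ↔ D ⊆ E ∧ IsMixed E ∅ D := by
  simp [IsSubgraph, IsMixed]

lemma isOrientation_iff_isMixed_self : IsOrientation E D ↔ D ⊆ E ∧ IsMixed E E D := by
  refine and_congr_right fun _ => forall₂_congr fun x hx => ?_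
  simp only [hx, not_true_eq_false, false_and, iff_false]
  tauto

lemma isMixed_iff_of_agree (he : e ∈ E) (hee : drev e ∈ E)
    (hD : ∀ x ∉ ({e, drev e} : Finset (V × V)), x ∈ D ↔ x ∈ D₀)
    (hS : ∀ x ∉ ({e, drev e} : Finset (V × V)), x ∈ S ↔ x ∈ S₀) :
    IsMixed E S D ↔
      ((e ∈ D ↔ drev e ∈ D) ↔ (e ∉ S ∧ drev e ∉ S)) ∧ IsMixed (psub E e) S₀ D₀ := by
  have hagree : ∀ x ∈ psub E e, ((x ∈ D ↔ drev x ∈ D) ↔ (x ∉ S ∧ drev x ∉ S)) ↔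
      ((x ∈ D₀ ↔ drev x ∈ D₀) ↔ (x ∉ S₀ ∧ drev x ∉ S₀)) := by
    intro x hx
    have hx' : x ∉ ({e, drev e} : Finset (V × V)) := (mem_sdiff.mp hx).2
    have hdx : drev x ∉ ({e, drev e} : Finset (V × V)) := drev_mem_pair.not.mpr hx'
    rw [hD x hx', hD _ hdx, hS x hx', hS _ hdx]
  refine ⟨fun h => ⟨h e he, fun x hx => (hagree x hx).mp (h x (mem_sdiff.mp hx).1)⟩,
    fun ⟨hpair, hrest⟩ x hx => ?_⟩
  by_cases hxpair : x ∈ ({e, drev e} : Finset (V × V))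
  · rcases mem_insert.mp hxpair with rfl | hx'
    · exact hpair
    · rw [mem_singleton.mp hx', drev_drev]
      tauto
  · exact (hagree x (mem_sdiff.mpr ⟨hx, hxpair⟩)).mpr (hrest x (mem_sdiff.mpr ⟨hx, hxpair⟩))

lemma isMixed_insert_of_drev_mem (h : drev e ∈ S) :
    IsMixed E (insert e S) D ↔ IsMixed E S D := by
  refine forall₂_congr fun x _ => iff_congr Iff.rfl ?_
  by_cases hx : x = e
  · subst hx; simp [h]
  · by_cases hx' : drev x = e
    · subst hx'
      rw [drev_drev] at h
      simp [h]
    · simp [hx, hx']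

variable {M : Type*} [AddCommMonoid M] {g : Finset (V × V) → M}

def HasPairExchange (E : Finset (V × V)) (g : Finset (V × V) → M) : Prop :=
  ∀ e ∈ E, ∀ D₀ ⊆ psub E e,
    g D₀ + g (insert e (insert (drev e) D₀)) = g (insert e D₀) + g (insert (drev e) D₀)

lemma sum_powerset_eq_sum_powerset_psub (he : e ∈ E) (hee : drev e ∈ E) (hne : e ≠ drev e)
    (f : Finset (V × V) → M) :
    ∑ D ∈ E.powerset, f D = ∑ D₀ ∈ (psub E e).powerset,
      ((f D₀ + f (insert (drev e) D₀)) +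
        (f (insert e D₀) + f (insert e (insert (drev e) D₀)))) := by
  have hE : E = insert e (insert (drev e) (psub E e)) := by
    ext x
    by_cases hx : x = e
    · simp [hx, he]
    · by_cases hx' : x = drev e
      · simp [hx', hee]
      · simp [psub, hx, hx']
  have heE₀ : e ∉ insert (drev e) (psub E e) := by simp [psub, hne]
  have heeE₀ : drev e ∉ psub E e := by simp [psub]
  conv_lhs => rw [hE]
  rw [sum_powerset_insert heE₀, sum_powerset_insert heeE₀, sum_powerset_insert heeE₀,
    ← sum_add_distrib, ← sum_add_distrib, ← sum_add_distrib]

open Classical in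
lemma sum_isMixed_insert (he : e ∈ E) (hee : drev e ∈ E) (hne : e ≠ drev e)
    (heS : e ∉ S) (heeS : drev e ∉ S) (hg : HasPairExchange E g) :
    ∑ D ∈ E.powerset with IsMixed E (insert e S) D, g D =
      ∑ D ∈ E.powerset with IsMixed E S D, g D := by
  rw [sum_filter, sum_filter, sum_powerset_eq_sum_powerset_psub he hee hne,
    sum_powerset_eq_sum_powerset_psub he hee hne]
  refine sum_congr rfl fun D₀ hD₀ => ?_
  have hD₀E := mem_powerset.mp hD₀
  have heD₀ : e ∉ D₀ := fun h => (mem_sdiff.mp (hD₀E h)).2 (by simp)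
  have heeD₀ : drev e ∉ D₀ := fun h => (mem_sdiff.mp (hD₀E h)).2 (by simp)
  have agree : ∀ a ∈ ({e, drev e} : Finset (V × V)), ∀ T : Finset (V × V),
      ∀ x ∉ ({e, drev e} : Finset (V × V)), x ∈ insert a T ↔ x ∈ T :=
    fun a ha T x hx => by rw [mem_insert]; exact or_iff_right fun h => hx (h ▸ ha)
  have hS := agree e (by simp) S
  have hS' : ∀ x ∉ ({e, drev e} : Finset (V × V)), x ∈ S ↔ x ∈ S := fun _ _ => Iff.rfl
  have hD : ∀ x ∉ ({e, drev e} : Finset (V × V)), x ∈ D₀ ↔ x ∈ D₀ := fun _ _ => Iff.rfl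
  have hDe := agree e (by simp) D₀
  have hDee := agree (drev e) (by simp) D₀
  have hDb : ∀ x ∉ ({e, drev e} : Finset (V × V)), x ∈ insert e (insert (drev e) D₀) ↔ x ∈ D₀ :=
    fun x hx => (agree e (by simp) _ x hx).trans (hDee x hx)
  rw [isMixed_iff_of_agree he hee hD hS, isMixed_iff_of_agree he hee hDe hS,
    isMixed_iff_of_agree he hee hDee hS, isMixed_iff_of_agree he hee hDb hS,
    isMixed_iff_of_agree he hee hD hS', isMixed_iff_of_agree he hee hDe hS',
    isMixed_iff_of_agree he hee hDee hS', isMixed_iff_of_agree he hee hDb hS']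
  by_cases hm : IsMixed (psub E e) S D₀
  · simp [hm, heS, heeS, hne, hne.symm, heD₀, heeD₀, hg e he D₀ hD₀E, add_comm]
  · simp [hm]

open Classical in
lemma sum_isMixed_eq_sum_isMixed_empty (hE : ∀ x, x ∈ E ↔ drev x ∈ E)
    (hE_ne : ∀ x ∈ E, x ≠ drev x) (hg : HasPairExchange E g) (hS : S ⊆ E) :
    ∑ D ∈ E.powerset with IsMixed E S D, g D = ∑ D ∈ E.powerset with IsMixed E ∅ D, g D := by
  induction S using Finset.induction_on with
  | empty => rfl
  | insert a S haS ih =>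
    obtain ⟨ha, hS⟩ := insert_subset_iff.mp hS
    rw [← ih hS]
    by_cases haa : drev a ∈ S
    · simp only [isMixed_insert_of_drev_mem haa]
    · exact sum_isMixed_insert ha ((hE a).mp ha) (hE_ne a ha) haS haa hg

open Classical in
lemma sum_isSubgraph_eq_sum_isOrientation (hE : ∀ x, x ∈ E ↔ drev x ∈ E)
    (hE_ne : ∀ x ∈ E, x ≠ drev x) (hg : HasPairExchange E g) :
    ∑ D ∈ E.powerset with IsSubgraph E D, g D =
      ∑ D ∈ E.powerset with IsOrientation E D, g D := by
  have hsub : E.powerset.filter (IsSubgraph E) = E.powerset.filter (IsMixed E ∅) :=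
    filter_congr fun D hD => by
      rw [isSubgraph_iff_isMixed_empty, and_iff_right (mem_powerset.mp hD)]
  have hori : E.powerset.filter (IsOrientation E) = E.powerset.filter (IsMixed E E) :=
    filter_congr fun D hD => by
      rw [isOrientation_iff_isMixed_self, and_iff_right (mem_powerset.mp hD)]
  rw [hsub, hori, sum_isMixed_eq_sum_isMixed_empty hE hE_ne hg subset_rfl]

end Mixed

section Flows

variable {V : Type*} {E D D' S : Finset (V × V)} {d : V → ℤ} {w f g : V × V → ℝ}

lemma flowCost_add : flowCost E w (f + g) = flowCost E w f + flowCost E w g := by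
  simp [flowCost, mul_add, sum_add_distrib]

lemma flowCost_sub : flowCost E w (f - g) = flowCost E w f - flowCost E w g := by
  simp [flowCost, mul_sub, sum_sub_distrib]

lemma flowCost_smul (c : ℝ) : flowCost E w (c • f) = c * flowCost E w f := by
  simp [flowCost, mul_sum, mul_left_comm]

variable [DecidableEq V]

lemma flowCost_ind (hS : S ⊆ E) : flowCost E w (ind S) = ∑ x ∈ S, w x := by
  simp [flowCost, ind, sum_ite_mem, inter_eq_right.mpr hS]

lemma ind_injective : Function.Injective (ind : Finset (V × V) → V × V → ℝ) := by
  intro S S' h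
  ext x
  have hx := congrFun h x
  by_cases h₁ : x ∈ S <;> by_cases h₂ : x ∈ S' <;> simp_all [ind]

variable [Fintype V]

def netOutflow (E : Finset (V × V)) : (V × V → ℝ) →ₗ[ℝ] V → ℝ where
  toFun f u := ∑ v ∈ univ.filter (fun v => (u, v) ∈ E), f (u, v) -
    ∑ v ∈ univ.filter (fun v => (v, u) ∈ E), f (v, u)
  map_add' f g := by ext u; simp only [Pi.add_apply, sum_add_distrib]; ring
  map_smul' c f := by ext u; simp [mul_sum, mul_sub]

lemma isFlow_iff : IsFlow E D d f ↔ (∀ x ∈ E, 0 ≤ f x ∧ f x ≤ 1) ∧ (∀ x ∉ D, f x = 0) ∧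
    netOutflow E f = fun u => (d u : ℝ) := by
  rw [funext_iff]; rfl

lemma netOutflow_eq_zero_of_symm (hE : ∀ x, x ∈ E ↔ drev x ∈ E)
    (hf : ∀ x, f (drev x) = f x) : netOutflow E f = 0 := by
  ext u
  refine sub_eq_zero.mpr (sum_congr (filter_congr fun v _ => hE (u, v)) fun v _ => ?_)
  exact (hf (u, v)).symm

lemma IsFlow.mono (hf : IsFlow E D d f) (h : D ⊆ D') : IsFlow E D' d f :=
  ⟨hf.1, fun x hx => hf.2.1 x fun hxD => hx (h hxD), hf.2.2⟩

lemma IsFlow.restrict (hf : IsFlow E D d f) (h : ∀ x ∉ D', f x = 0) : IsFlow E D' d f :=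
  ⟨hf.1, h, hf.2.2⟩

lemma AdmitsFlow.mono (h : AdmitsFlow E D d) (hDD' : D ⊆ D') : AdmitsFlow E D' d :=
  let ⟨f, hf⟩ := h; ⟨f, hf.mono hDD'⟩

lemma IsFlow.smul_add_one_sub_smul {t : ℝ} (hf : IsFlow E D d f) (hg : IsFlow E D d g)
    (ht₀ : 0 ≤ t) (ht₁ : t ≤ 1) : IsFlow E D d (t • f + (1 - t) • g) := by
  rw [isFlow_iff] at hf hg ⊢
  refine ⟨fun x hx => ?_, fun x hx => by simp [hf.2.1 x hx, hg.2.1 x hx], ?_⟩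
  · obtain ⟨⟨hf₀, hf₁⟩, hg₀, hg₁⟩ := And.intro (hf.1 x hx) (hg.1 x hx)
    simp only [Pi.add_apply, Pi.smul_apply, smul_eq_mul]
    constructor <;> nlinarith
  · rw [map_add, map_smul, map_smul, hf.2.2, hg.2.2]
    ext u
    simp only [Pi.add_apply, Pi.smul_apply, smul_eq_mul]
    ring

lemma IsFlow.sub_smul_ind (hE : ∀ x, x ∈ E ↔ drev x ∈ E) (hf : IsFlow E D d f)
    (hS : ∀ x, drev x ∈ S ↔ x ∈ S) {m : ℝ} (hm : 0 ≤ m) (hmf : ∀ x ∈ S, m ≤ f x) :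
    IsFlow E D d (f - m • ind S) := by
  rw [isFlow_iff] at hf ⊢
  refine ⟨fun x hx => ?_, fun x hx => ?_, ?_⟩
  · have := hf.1 x hx
    by_cases hxS : x ∈ S
    · have := hmf x hxS
      simp only [Pi.sub_apply, Pi.smul_apply, ind, hxS, if_true, smul_eq_mul, mul_one]
      constructor <;> linarith
    · simpa [ind, hxS] using this
  · have := hf.2.1 x hx
    by_cases hxS : x ∈ S
    · have := hmf x hxS
      simp only [Pi.sub_apply, Pi.smul_apply, ind, hxS, if_true, smul_eq_mul, mul_one]
      linarith
    · simp [ind, hxS, this]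
  · have hsymm : netOutflow E (ind S) = 0 :=
      netOutflow_eq_zero_of_symm hE fun x => by simp only [ind, hS]
    rw [map_sub, map_smul, hsymm, smul_zero, sub_zero, hf.2.2]

lemma IsFlow.half_add_half_sub_half_ind_pair (hE : ∀ x, x ∈ E ↔ drev x ∈ E) {e : V × V}
    (hne : e ≠ drev e) {S₁ S₂ : Finset (V × V)} (hf₁ : IsFlow E (insert e D) d (ind S₁))
    (hf₂ : IsFlow E (insert (drev e) D) d (ind S₂)) (hS₁ : S₁ ⊆ insert e D)
    (hS₂ : S₂ ⊆ insert (drev e) D) (he₁ : e ∈ S₁) (he₂ : drev e ∈ S₂) :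
    IsFlow E D d ((1 / 2 : ℝ) • ind S₁ + (1 - 1 / 2 : ℝ) • ind S₂ -
      (1 / 2 : ℝ) • ind {e, drev e}) := by
  have hf := (hf₁.mono (insert_subset_insert _ (subset_insert (drev e) D))).smul_add_one_sub_smul
    (hf₂.mono (subset_insert e _)) (t := 1 / 2) (by norm_num) (by norm_num)
  have hS₁' : ∀ x ∉ D, x ∈ S₁ ↔ x = e := fun x hx =>
    ⟨fun h => (mem_insert.mp (hS₁ h)).resolve_right hx, fun h => h ▸ he₁⟩
  have hS₂' : ∀ x ∉ D, x ∈ S₂ ↔ x = drev e := fun x hx =>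
    ⟨fun h => (mem_insert.mp (hS₂ h)).resolve_right hx, fun h => h ▸ he₂⟩
  refine (hf.sub_smul_ind hE (S := {e, drev e}) (fun _ => drev_mem_pair) (m := 1 / 2)
    (by norm_num) fun x hx => ?_).restrict
    fun x hx => ?_
  · simp only [Pi.add_apply, Pi.smul_apply, smul_eq_mul, ind]
    rcases mem_insert.mp hx with rfl | hx
    · simp only [he₁]
      split_ifs <;> norm_num
    · simp only [mem_singleton.mp hx, he₂]
      split_ifs <;> norm_num
  · simp only [Pi.sub_apply, Pi.add_apply, Pi.smul_apply, smul_eq_mul, ind, hS₁' x hx,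
      hS₂' x hx, mem_insert, mem_singleton]
    by_cases hxe : x = e
    · simp [hxe, hne]
    · by_cases hxee : x = drev e
      · simp [hxee, hne.symm]; norm_num
      · simp [hxe, hxee]

end Flows

section MinCostFlow

variable {V : Type*} [Fintype V] [DecidableEq V] {E D₀ X Y : Finset (V × V)} {d : V → ℤ}
  {w : V × V → ℝ} {A : Finset (V × V) → Finset (V × V)} {e : V × V}

lemma A_subset (hA : GoodA E d w A) (hY : Y ⊆ E) (hYa : AdmitsFlow E Y d) : A Y ⊆ Y := by
  intro x hx
  by_contra hxY
  simpa [ind, hx] using (hA Y hY hYa).1.1.2.1 x hxY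

lemma A_eq_of_A_subset (hA : GoodA E d w A) (hXY : X ⊆ Y) (hY : Y ⊆ E)
    (hYa : AdmitsFlow E Y d) (h : A Y ⊆ X) : AdmitsFlow E X d ∧ A X = A Y := by
  obtain ⟨hflow, hmin⟩ := (hA Y hY hYa).1
  have hflowX : IsFlow E X d (ind (A Y)) :=
    hflow.restrict fun x hx => by simp [ind, show x ∉ A Y from fun hxA => hx (h hxA)]
  have hXa : AdmitsFlow E X d := ⟨_, hflowX⟩
  refine ⟨hXa, ind_injective ?_⟩
  exact ((hA X (hXY.trans hY) hXa).2 _ ⟨hflowX, fun g hg => hmin g (hg.mono hXY)⟩).symm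

lemma drev_notMem_A (hE : ∀ x, x ∈ E ↔ drev x ∈ E) (hw : ∀ x ∈ E, 0 < w x)
    (hA : GoodA E d w A) (hY : Y ⊆ E) (hYa : AdmitsFlow E Y d) (he : e ∈ A Y) :
    drev e ∉ A Y := by
  intro hee
  obtain ⟨hflow, hmin⟩ := (hA Y hY hYa).1
  have hpair : ({e, drev e} : Finset (V × V)) ⊆ E :=
    insert_subset (hY (A_subset hA hY hYa he))
      (singleton_subset_iff.mpr (hY (A_subset hA hY hYa hee)))
  have hcancel := hflow.sub_smul_ind hE (S := {e, drev e}) (fun _ => drev_mem_pair)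
    zero_le_one fun x hx => by
      rcases mem_insert.mp hx with rfl | hx
      · simp [ind, he]
      · simp [ind, mem_singleton.mp hx, hee]
  have hle := hmin _ hcancel
  rw [flowCost_sub, one_smul, flowCost_ind hpair] at hle
  have : 0 < ∑ x ∈ {e, drev e}, w x :=
    sum_pos (fun x hx => hw x (hpair hx)) (insert_nonempty _ _)
  linarith

lemma A_insert_eq_or (hE : ∀ x, x ∈ E ↔ drev x ∈ E) (hw : ∀ x ∈ E, 0 < w x)
    (hA : GoodA E d w A) (hD : insert e (insert (drev e) D₀) ⊆ E)
    (hDa : AdmitsFlow E (insert e (insert (drev e) D₀)) d) :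
    (AdmitsFlow E (insert e D₀) d ∧ A (insert e D₀) = A (insert e (insert (drev e) D₀))) ∨
      (AdmitsFlow E (insert (drev e) D₀) d ∧
        A (insert (drev e) D₀) = A (insert e (insert (drev e) D₀))) := by
  have hsub := A_subset hA hD hDa
  by_cases he : e ∈ A (insert e (insert (drev e) D₀))
  · have hee := drev_notMem_A hE hw hA hD hDa he
    refine .inl (A_eq_of_A_subset hA (insert_subset_insert _ (subset_insert _ _)) hD hDa ?_)
    intro x hx
    have := hsub hx
    simp only [mem_insert] at this ⊢
    rcases this with rfl | rfl | h
    · exact .inl rfl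
    · exact absurd hx hee
    · exact .inr h
  · refine .inr (A_eq_of_A_subset hA (subset_insert _ _) hD hDa ?_)
    intro x hx
    exact (mem_insert.mp (hsub hx)).resolve_left fun h => he (h ▸ hx)

lemma drev_notMem_A_insert_drev_of_mem (hE : ∀ x, x ∈ E ↔ drev x ∈ E)
    (hw : ∀ x ∈ E, 0 < w x) (hA : GoodA E d w A) (hne : e ≠ drev e) (he : e ∈ E)
    (hD₀ : D₀ ⊆ E) (hDe : AdmitsFlow E (insert e D₀) d)
    (hDee : AdmitsFlow E (insert (drev e) D₀) d) (hmem : e ∈ A (insert e D₀)) :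
    drev e ∉ A (insert (drev e) D₀) := by
  intro hmem'
  have hee : drev e ∈ E := (hE e).mp he
  have hDeE : insert e D₀ ⊆ E := insert_subset he hD₀
  have hDeeE : insert (drev e) D₀ ⊆ E := insert_subset hee hD₀
  obtain ⟨hflow₁, hmin₁⟩ := (hA _ hDeE hDe).1
  obtain ⟨hflow₂, hmin₂⟩ := (hA _ hDeeE hDee).1
  set f := (1 / 2 : ℝ) • ind (A (insert e D₀)) + (1 - 1 / 2 : ℝ) • ind (A (insert (drev e) D₀))
  have hg₀ : IsFlow E D₀ d (f - (1 / 2 : ℝ) • ind {e, drev e}) :=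
    hflow₁.half_add_half_sub_half_ind_pair hE hne hflow₂ (A_subset hA hDeE hDe)
      (A_subset hA hDeeE hDee) hmem hmem'
  have hcost : flowCost E w (f - (1 / 2 : ℝ) • ind {e, drev e}) =
      (flowCost E w (ind (A (insert e D₀))) + flowCost E w (ind (A (insert (drev e) D₀)))) / 2
        - (w e + w (drev e)) / 2 := by
    rw [flowCost_sub, flowCost_add, flowCost_smul, flowCost_smul, flowCost_smul,
      flowCost_ind (insert_subset he (singleton_subset_iff.mpr hee)), sum_pair hne]
    ring
  have h₁ := hmin₁ _ (hg₀.mono (subset_insert _ _))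
  have h₂ := hmin₂ _ (hg₀.mono (subset_insert _ _))
  linarith [hw e he, hw _ hee]

lemma drev_notMem_A_insert_drev_of_A_eq (hE : ∀ x, x ∈ E ↔ drev x ∈ E)
    (hw : ∀ x ∈ E, 0 < w x) (hA : GoodA E d w A) (hne : e ≠ drev e) (he : e ∈ E)
    (hD₀ : D₀ ⊆ E) (heeD₀ : drev e ∉ D₀) (hDe : AdmitsFlow E (insert e D₀) d)
    (hDee : AdmitsFlow E (insert (drev e) D₀) d)
    (hAeq : A (insert e D₀) = A (insert e (insert (drev e) D₀))) :
    drev e ∉ A (insert (drev e) D₀) := by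
  intro hmem
  by_cases hmem₁ : e ∈ A (insert e D₀)
  · exact drev_notMem_A_insert_drev_of_mem hE hw hA hne he hD₀ hDe hDee hmem₁ hmem
  have hsub : A (insert e D₀) ⊆ D₀ := fun x hx =>
    (mem_insert.mp (A_subset hA (insert_subset he hD₀) hDe hx)).resolve_left
      fun h => hmem₁ (h ▸ hx)
  have hDE : insert e (insert (drev e) D₀) ⊆ E :=
    insert_subset he (insert_subset ((hE e).mp he) hD₀)
  have hAeq' := (A_eq_of_A_subset hA (subset_insert _ _) hDE
    (hDe.mono (insert_subset_insert _ (subset_insert _ _)))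
    ((hAeq ▸ hsub).trans (subset_insert _ _))).2
  exact heeD₀ (hsub (hAeq ▸ hAeq' ▸ hmem))

open Classical in
noncomputable def minFlowIndicator (E : Finset (V × V)) (d : V → ℤ)
    (A : Finset (V × V) → Finset (V × V)) (F D : Finset (V × V)) : ℕ :=
  if AdmitsFlow E D d ∧ A D = F then 1 else 0

lemma minFlowIndicator_add_of_A_eq (hE : ∀ x, x ∈ E ↔ drev x ∈ E)
    (hw : ∀ x ∈ E, 0 < w x) (hA : GoodA E d w A) (hne : e ≠ drev e) (he : e ∈ E)
    (hD₀ : D₀ ⊆ E) (heeD₀ : drev e ∉ D₀) (hDe : AdmitsFlow E (insert e D₀) d)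
    (hAeq : A (insert e D₀) = A (insert e (insert (drev e) D₀))) (F : Finset (V × V)) :
    minFlowIndicator E d A F D₀ + minFlowIndicator E d A F (insert e (insert (drev e) D₀)) =
      minFlowIndicator E d A F (insert e D₀) + minFlowIndicator E d A F (insert (drev e) D₀) := by
  classical
  have hDb := hDe.mono (insert_subset_insert e (subset_insert (drev e) D₀))
  have hD₀iff : (AdmitsFlow E D₀ d ∧ A D₀ = F) ↔
      (AdmitsFlow E (insert (drev e) D₀) d ∧ A (insert (drev e) D₀) = F) := by
    by_cases hDee : AdmitsFlow E (insert (drev e) D₀) d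
    · have hnot := drev_notMem_A_insert_drev_of_A_eq hE hw hA hne he hD₀ heeD₀ hDe hDee hAeq
      have hDeeE : insert (drev e) D₀ ⊆ E := insert_subset ((hE e).mp he) hD₀
      obtain ⟨hD₀a, hA₀⟩ := A_eq_of_A_subset hA (subset_insert _ _) hDeeE hDee fun x hx =>
        (mem_insert.mp (A_subset hA hDeeE hDee hx)).resolve_left fun h => hnot (h ▸ hx)
      simp [hD₀a, hA₀, hDee]
    · have hD₀ : ¬ AdmitsFlow E D₀ d := fun h => hDee (h.mono (subset_insert _ _))
      simp [hDee, hD₀]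
  simp only [minFlowIndicator, hDe, hDb, true_and, ← hAeq]
  rw [if_congr hD₀iff rfl rfl, add_comm]

lemma hasPairExchange_minFlowIndicator (hE : ∀ x, x ∈ E ↔ drev x ∈ E)
    (hE_ne : ∀ x ∈ E, x ≠ drev x) (hw : ∀ x ∈ E, 0 < w x) (hA : GoodA E d w A)
    (F : Finset (V × V)) : HasPairExchange E (minFlowIndicator E d A F) := by
  intro e he D₀ hD₀psub
  have hee : drev e ∈ E := (hE e).mp he
  have hD₀ : D₀ ⊆ E := hD₀psub.trans sdiff_subset
  have heD₀ : e ∉ D₀ := fun h => (mem_sdiff.mp (hD₀psub h)).2 (by simp)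
  have heeD₀ : drev e ∉ D₀ := fun h => (mem_sdiff.mp (hD₀psub h)).2 (by simp)
  by_cases hDb : AdmitsFlow E (insert e (insert (drev e) D₀)) d
  · rcases A_insert_eq_or hE hw hA (insert_subset he (insert_subset hee hD₀)) hDb with
      ⟨hDe, hAeq⟩ | ⟨hDee, hAeq⟩
    · exact minFlowIndicator_add_of_A_eq hE hw hA (hE_ne e he) he hD₀ heeD₀ hDe hAeq F
    · rw [insert_comm] at hAeq ⊢
      rw [add_comm (minFlowIndicator E d A F (insert e D₀))]
      exact minFlowIndicator_add_of_A_eq hE hw hA (hE_ne e he).symm hee hD₀ heD₀ hDee hAeq F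
  · have hnot : ∀ D ⊆ insert e (insert (drev e) D₀), ¬ AdmitsFlow E D d :=
      fun D hD h => hDb (h.mono hD)
    simp [minFlowIndicator, hDb, hnot D₀ (by intro x hx; simp [hx]),
      hnot (insert e D₀) (insert_subset_insert _ (subset_insert _ _)),
      hnot (insert (drev e) D₀) (subset_insert _ _)]

end MinCostFlow

theorem card_subgraphs_eq_card_orientations_with_given_min_cost_flow_general
    {V : Type*} [Fintype V] [DecidableEq V]
    (E : Finset (V × V)) (hE_symm : ∀ e, e ∈ E ↔ drev e ∈ E)
    (hE_ne : ∀ e ∈ E, e.1 ≠ e.2)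
    (d : V → ℤ)
    (w : V × V → ℝ) (hw : ∀ e ∈ E, 0 < w e)
    (A : Finset (V × V) → Finset (V × V)) (hA : GoodA E d w A)
    (F : Finset (V × V)) :
    {K : Finset (V × V) | IsSubgraph E K ∧ AdmitsFlow E K d ∧ A K = F}.ncard =
      {L : Finset (V × V) | IsOrientation E L ∧ AdmitsFlow E L d ∧ A L = F}.ncard := by
  classical
  have hne : ∀ e ∈ E, e ≠ drev e := fun e he h => hE_ne e he (congrArg Prod.fst h)
  rw [Set.ncard_setOf_and_eq_sum E.powerset fun K hK => mem_powerset.mpr hK.1,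
    Set.ncard_setOf_and_eq_sum E.powerset fun L hL => mem_powerset.mpr hL.1]
  exact sum_isSubgraph_eq_sum_isOrientation (g := minFlowIndicator E d A F) hE_symm hne
    (hasPairExchange_minFlowIndicator hE_symm hne hw hA F)

theorem card_subgraphs_eq_card_orientations_with_given_min_cost_flow
    {V : Type*} [Fintype V] [DecidableEq V]
    (E : Finset (V × V)) (hE_symm : ∀ e, e ∈ E ↔ drev e ∈ E)
    (hE_ne : ∀ e ∈ E, e.1 ≠ e.2)
    (d : V → ℤ) (hd : ∑ u : V, d u = 0)
    (w : V × V → ℝ) (hw : ∀ e ∈ E, 0 < w e)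
    (A : Finset (V × V) → Finset (V × V)) (hA : GoodA E d w A)
    (F : Finset (V × V)) (hF : F ⊆ E) :
    {K : Finset (V × V) | IsSubgraph E K ∧ AdmitsFlow E K d ∧ A K = F}.ncard =
      {L : Finset (V × V) | IsOrientation E L ∧ AdmitsFlow E L d ∧ A L = F}.ncard :=
  card_subgraphs_eq_card_orientations_with_given_min_cost_flow_general E hE_symm hE_ne d w hw A hA F
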